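/- arXiv:1308.1385 — 2 statements merged into one kernel-verified Lean document; each statement's English description precedes it below -/
import Mathlib

section
/- For any database D, any estimates ŷ_T ∈ ℝ indexed by subsets T ⊆ [d], any S ⊆ [d] with |S| = k and β ∈ {−1,1}^S, setting z_{S,β} = Σ_{T ⊆ S} α_{S,β,T} · ŷ_T, one has |z_{S,β} − marg_{(S,β)}(D)|² ≤ 2^{−k} · Σ_{T ⊆ S} |ŷ_T − parity_T(D)|². -/
/-!
On `{−1,1}` the indicator of `x = b` is `(1 + b x)/2`, so expanding the product over `S` writes
the marginal as `2^{−k} Σ_{T ⊆ S} (∏_{i∈T} β_i) parity_T(D)`. Hence the error of `z_{S,β}` is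
`2^{−k}` times a signed sum of the `2^k` parity errors, and Cauchy–Schwarz bounds its square by
`2^{−2k} · 2^k` times the sum of their squares.
-/

open Finset

variable {ι : Type*}

def parity (D : Multiset (ι → ℝ)) (T : Finset ι) : ℝ :=
  (D.map fun e => ∏ i ∈ T, e i).sum

noncomputable def marginal (D : Multiset (ι → ℝ)) (S : Finset ι) (β : ι → ℝ) : ℝ :=
  (D.map fun e => ∏ i ∈ S, if e i = β i then (1 : ℝ) else 0).sum

lemma ite_eq_one_zero_of_sign {x b : ℝ} (hx : x = 1 ∨ x = -1) (hb : b = 1 ∨ b = -1) :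
    (if x = b then (1 : ℝ) else 0) = (b * x + 1) / 2 := by
  rcases hx with rfl | rfl <;> rcases hb with rfl | rfl <;> norm_num

lemma two_pow_card_mul_prod_ite_eq [DecidableEq ι] {S : Finset ι} {e β : ι → ℝ}
    (he : ∀ i ∈ S, e i = 1 ∨ e i = -1) (hβ : ∀ i ∈ S, β i = 1 ∨ β i = -1) :
    2 ^ #S * ∏ i ∈ S, (if e i = β i then (1 : ℝ) else 0) =
      ∑ T ∈ S.powerset, (∏ i ∈ T, β i) * ∏ i ∈ T, e i := by
  rw [prod_congr rfl fun i hi => ite_eq_one_zero_of_sign (he i hi) (hβ i hi), prod_div_distrib,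
    prod_const, mul_div_cancel₀ _ (by positivity), prod_add]
  simp only [prod_const_one, mul_one, prod_mul_distrib]

lemma two_pow_card_mul_marginal [DecidableEq ι] {D : Multiset (ι → ℝ)} (hD : ∀ e ∈ D, ∀ i, e i = 1 ∨ e i = -1)
    {S : Finset ι} {β : ι → ℝ} (hβ : ∀ i ∈ S, β i = 1 ∨ β i = -1) :
    2 ^ #S * marginal D S β = ∑ T ∈ S.powerset, (∏ i ∈ T, β i) * parity D T := by
  simp only [marginal, parity, ← Multiset.sum_map_mul_left]
  rw [Multiset.map_congr rfl fun e he => two_pow_card_mul_prod_ite_eq (fun i _ => hD e he i) hβ]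
  exact Multiset.sum_map_sum_map _ _

lemma sq_sum_mul_le_card_mul_sum_sq {s : Finset ι} {σ a : ι → ℝ}
    (hσ : ∀ i ∈ s, σ i ^ 2 = 1) :
    (∑ i ∈ s, σ i * a i) ^ 2 ≤ #s * ∑ i ∈ s, a i ^ 2 := by
  calc (∑ i ∈ s, σ i * a i) ^ 2 ≤ #s * ∑ i ∈ s, (σ i * a i) ^ 2 := sq_sum_le_card_mul_sum_sq
    _ = #s * ∑ i ∈ s, a i ^ 2 := by
      congr 1
      exact sum_congr rfl fun i hi => by rw [mul_pow, hσ i hi, one_mul]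

lemma sq_prod_eq_one_of_sign {T : Finset ι} {β : ι → ℝ} (hβ : ∀ i ∈ T, β i = 1 ∨ β i = -1) :
    (∏ i ∈ T, β i) ^ 2 = 1 := by
  rw [← prod_pow]
  exact prod_eq_one fun i hi => by rcases hβ i hi with h | h <;> simp [h]

theorem sq_abs_sub_marginal_le [DecidableEq ι] {D : Multiset (ι → ℝ)} (hD : ∀ e ∈ D, ∀ i, e i = 1 ∨ e i = -1)
    (yhat : Finset ι → ℝ) {S : Finset ι} {β : ι → ℝ} (hβ : ∀ i ∈ S, β i = 1 ∨ β i = -1) :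
    |(∑ T ∈ S.powerset, ((2 : ℝ) ^ (-(#S : ℤ)) * ∏ i ∈ T, β i) * yhat T) - marginal D S β| ^ 2 ≤
      (2 : ℝ) ^ (-(#S : ℤ)) * ∑ T ∈ S.powerset, |yhat T - parity D T| ^ 2 := by
  set c : ℝ := 2 ^ (-(#S : ℤ))
  have hc : c * 2 ^ #S = 1 := by
    rw [← zpow_natCast, ← zpow_add₀ two_ne_zero, neg_add_cancel, zpow_zero]
  have herr : (∑ T ∈ S.powerset, (c * ∏ i ∈ T, β i) * yhat T) - marginal D S β =
      c * ∑ T ∈ S.powerset, (∏ i ∈ T, β i) * (yhat T - parity D T) := by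
    have hmarg : marginal D S β = c * ∑ T ∈ S.powerset, (∏ i ∈ T, β i) * parity D T := by
      rw [← two_pow_card_mul_marginal hD hβ, ← mul_assoc, hc, one_mul]
    simp only [hmarg, mul_sub, sum_sub_distrib, mul_sum, mul_assoc]
  have hsigns : ∀ T ∈ S.powerset, (∏ i ∈ T, β i) ^ 2 = 1 := fun T hT =>
    sq_prod_eq_one_of_sign fun i hi => hβ i (mem_powerset.mp hT hi)
  calc |(∑ T ∈ S.powerset, (c * ∏ i ∈ T, β i) * yhat T) - marginal D S β| ^ 2
      = c ^ 2 * (∑ T ∈ S.powerset, (∏ i ∈ T, β i) * (yhat T - parity D T)) ^ 2 := by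
        rw [herr, sq_abs, mul_pow]
    _ ≤ c ^ 2 * (2 ^ #S * ∑ T ∈ S.powerset, (yhat T - parity D T) ^ 2) := by
        gcongr
        simpa using sq_sum_mul_le_card_mul_sum_sq hsigns
    _ = c * ∑ T ∈ S.powerset, |yhat T - parity D T| ^ 2 := by
        simp only [sq_abs]
        linear_combination c * (∑ T ∈ S.powerset, (yhat T - parity D T) ^ 2) * hc

theorem stmt_2_general (d k : ℕ)
    (D : Multiset (Fin d → ℝ)) (hD : ∀ e ∈ D, ∀ i, e i = 1 ∨ e i = -1)
    (yhat : Finset (Fin d) → ℝ)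
    (S : Finset (Fin d)) (hS : S.card = k)
    (β : Fin d → ℝ) (hβ : ∀ i ∈ S, β i = 1 ∨ β i = -1) :
    |(∑ T ∈ S.powerset, ((2 : ℝ) ^ (-(k : ℤ)) * ∏ i ∈ T, β i) * yhat T) -
        (D.map fun e => ∏ i ∈ S, (if e i = β i then (1 : ℝ) else 0)).sum| ^ 2 ≤
      (2 : ℝ) ^ (-(k : ℤ)) *
        ∑ T ∈ S.powerset, |yhat T - (D.map fun e => ∏ i ∈ T, e i).sum| ^ 2 := by
  subst hS
  exact sq_abs_sub_marginal_le hD yhat hβ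

/-- For any estimates `ŷ_T`, any `S ⊆ [d]` with `|S| = k` and
`β ∈ {−1,1}^S`, setting `z_{S,β} = Σ_{T ⊆ S} α_{S,β,T} ŷ_T` (where
`α_{S,β,T} = 2^{−k} ∏_{i∈T} β_i`), one has
`|z_{S,β} − marg_{(S,β)}(D)|² ≤ 2^{−k} Σ_{T ⊆ S} |ŷ_T − parity_T(D)|²`. -/
theorem stmt_2 (d k : ℕ) (hd : 1 ≤ d) (hk : 1 ≤ k)
    (D : Multiset (Fin d → ℝ)) (hD : ∀ e ∈ D, ∀ i, e i = 1 ∨ e i = -1)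
    (yhat : Finset (Fin d) → ℝ)
    (S : Finset (Fin d)) (hS : S.card = k)
    (β : Fin d → ℝ) (hβ : ∀ i ∈ S, β i = 1 ∨ β i = -1) :
    |(∑ T ∈ S.powerset, ((2 : ℝ) ^ (-(k : ℤ)) * ∏ i ∈ T, β i) * yhat T) -
        (D.map fun e => ∏ i ∈ S, (if e i = β i then (1 : ℝ) else 0)).sum| ^ 2 ≤
      (2 : ℝ) ^ (-(k : ℤ)) *
        ∑ T ∈ S.powerset, |yhat T - (D.map fun e => ∏ i ∈ T, e i).sum| ^ 2 :=
  stmt_2_general d k D hD yhat S hS β hβ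
end

section
/- Let p be a probability distribution over pairs (S,β) with S ⊆ [d], |S| = k, β ∈ {−1,1}^S, and let p' be the distribution over subsets of [d] obtained by sampling (S,β) ∼ p and then sampling T uniformly at random among the 2^k subsets of S. For any database D, any estimates ŷ_T ∈ ℝ indexed by subsets T ⊆ [d], and any λ ≥ 0, if E_{T ∼ p'}[|ŷ_T − parity_T(D)|²] ≤ λ², then the estimates z_{S,β} = Σ_{T ⊆ S} α_{S,β,T} · ŷ_T satisfy E_{(S,β) ∼ p}[|z_{S,β} − marg_{(S,β)}(D)|²] ≤ λ². -/
open Finset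

/-!
On `±1`-vectors, `1[a = b] = (1 + b a) / 2` coordinatewise, so the marginal query of `(S, β)` is
the signed average `2^{-|S|} ∑_{T ⊆ S} β^T parity_T` of parity queries. Hence
`z_{S,β} - marg_{(S,β)}(D)` is a signed average of the `2^k` errors `ŷ_T - parity_T(D)`, and by
Cauchy–Schwarz its square is at most their mean square. Averaging over `(S, β) ∼ p` turns the
mean square into the expectation over `T ∼ p'`.
-/

lemma ite_eq_one_zero_eq_half_one_add_mul {a b : ℝ} (ha : a = 1 ∨ a = -1) (hb : b = 1 ∨ b = -1) :
    (if a = b then (1 : ℝ) else 0) = 2⁻¹ * (1 + b * a) := by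
  rcases ha with rfl | rfl <;> rcases hb with rfl | rfl <;> norm_num

section Fourier

variable {ι : Type*} (S : Finset ι) {b : ι → ℝ}

lemma prod_ite_eq_sum_powerset {a : ι → ℝ}
    (ha : ∀ i ∈ S, a i = 1 ∨ a i = -1) (hb : ∀ i ∈ S, b i = 1 ∨ b i = -1) :
    ∏ i ∈ S, (if a i = b i then (1 : ℝ) else 0) =
      ∑ T ∈ S.powerset, ((2 : ℝ) ^ (-(#S : ℤ)) * ∏ i ∈ T, b i) * ∏ i ∈ T, a i := by
  rw [prod_congr rfl fun i hi => ite_eq_one_zero_eq_half_one_add_mul (ha i hi) (hb i hi),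
    prod_mul_distrib, prod_const, prod_one_add, mul_sum]
  refine sum_congr rfl fun T _ => ?_
  rw [prod_mul_distrib, zpow_neg, zpow_natCast, inv_pow]
  ring

lemma sum_map_prod_ite_eq_sum_powerset (D : Multiset (ι → ℝ))
    (hD : ∀ e ∈ D, ∀ i ∈ S, e i = 1 ∨ e i = -1) (hb : ∀ i ∈ S, b i = 1 ∨ b i = -1) :
    (D.map fun e => ∏ i ∈ S, if e i = b i then (1 : ℝ) else 0).sum =
      ∑ T ∈ S.powerset, ((2 : ℝ) ^ (-(#S : ℤ)) * ∏ i ∈ T, b i) *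
        (D.map fun e => ∏ i ∈ T, e i).sum := by
  rw [Multiset.map_congr rfl fun e he => prod_ite_eq_sum_powerset S (hD e he) hb,
    Multiset.sum_map_sum]
  simp only [Multiset.sum_map_mul_left]

lemma sq_prod_eq_one (T : Finset ι) (hb : ∀ i ∈ T, b i = 1 ∨ b i = -1) :
    (∏ i ∈ T, b i) ^ 2 = 1 := by
  rw [← prod_pow]
  exact prod_eq_one fun i hi => by rcases hb i hi with h | h <;> simp [h]

lemma sq_abs_sum_powerset_sub_le (D : Multiset (ι → ℝ)) (y : Finset ι → ℝ)
    (hD : ∀ e ∈ D, ∀ i ∈ S, e i = 1 ∨ e i = -1) (hb : ∀ i ∈ S, b i = 1 ∨ b i = -1) :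
    |∑ T ∈ S.powerset, ((2 : ℝ) ^ (-(#S : ℤ)) * ∏ i ∈ T, b i) * y T -
        (D.map fun e => ∏ i ∈ S, if e i = b i then (1 : ℝ) else 0).sum| ^ 2 ≤
      ∑ T ∈ S.powerset, (2 : ℝ) ^ (-(#S : ℤ)) * |y T - (D.map fun e => ∏ i ∈ T, e i).sum| ^ 2 := by
  have hq : (#S.powerset : ℝ) * (2 : ℝ) ^ (-(#S : ℤ)) = 1 := by
    rw [card_powerset, Nat.cast_pow, Nat.cast_ofNat, zpow_neg, zpow_natCast,
      mul_inv_cancel₀ (by positivity)]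
  set q : ℝ := (2 : ℝ) ^ (-(#S : ℤ))
  set u : Finset ι → ℝ := fun T => y T - (D.map fun e => ∏ i ∈ T, e i).sum
  rw [sum_map_prod_ite_eq_sum_powerset S D hD hb, ← sum_sub_distrib, sq_abs]
  calc (∑ T ∈ S.powerset, ((q * ∏ i ∈ T, b i) * y T -
          (q * ∏ i ∈ T, b i) * (D.map fun e => ∏ i ∈ T, e i).sum)) ^ 2
      = (∑ T ∈ S.powerset, (q * ∏ i ∈ T, b i) * u T) ^ 2 := by simp only [u, mul_sub]
    _ ≤ #S.powerset * ∑ T ∈ S.powerset, ((q * ∏ i ∈ T, b i) * u T) ^ 2 :=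
        sq_sum_le_card_mul_sum_sq
    _ = ∑ T ∈ S.powerset, q * |u T| ^ 2 := by
        rw [mul_sum]
        refine sum_congr rfl fun T hT => ?_
        rw [mul_pow, mul_pow, sq_prod_eq_one T fun i hi => hb i (mem_powerset.1 hT hi), sq_abs]
        linear_combination q * u T ^ 2 * hq

end Fourier

lemma sum_mul_sum_powerset_eq_sum_mul {α ι : Type*} [Fintype α] [Fintype ι] [DecidableEq ι]
    (p : α → ℝ) (S : α → Finset ι) (q : ℝ) (g : Finset ι → ℝ) :
    ∑ x, p x * ∑ T ∈ (S x).powerset, q * g T =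
      ∑ T, (∑ x, p x * if T ⊆ S x then q else 0) * g T := by
  simp_rw [sum_mul, mul_sum]
  rw [sum_comm]
  refine sum_congr rfl fun x _ => ?_
  rw [show (S x).powerset = univ.filter (· ⊆ S x) by ext; simp, sum_filter]
  exact sum_congr rfl fun T _ => by split_ifs <;> ring

theorem stmt_3_general (d k : ℕ)
    (D : Multiset (Fin d → ℝ)) (hD : ∀ e ∈ D, ∀ i, e i = 1 ∨ e i = -1)
    (p : Finset (Fin d) × (Fin d → Bool) → ℝ)
    (hp0 : ∀ x, 0 ≤ p x)
    (hpk : ∀ x, p x ≠ 0 → x.1.card = k)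
    (yhat : Finset (Fin d) → ℝ) (lam : ℝ)
    (hmse : ∑ T : Finset (Fin d),
        (∑ x : Finset (Fin d) × (Fin d → Bool),
          p x * (if T ⊆ x.1 then (2 : ℝ) ^ (-(k : ℤ)) else 0)) *
        |yhat T - (D.map fun e => ∏ i ∈ T, e i).sum| ^ 2 ≤ lam ^ 2) :
    ∑ x : Finset (Fin d) × (Fin d → Bool),
      p x *
        |(∑ T ∈ x.1.powerset,
            ((2 : ℝ) ^ (-(k : ℤ)) * ∏ i ∈ T, (if x.2 i then (1 : ℝ) else -1)) * yhat T) -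
          (D.map fun e =>
            ∏ i ∈ x.1, (if e i = (if x.2 i then (1 : ℝ) else -1) then (1 : ℝ) else 0)).sum| ^ 2
      ≤ lam ^ 2 := by
  calc _ ≤ ∑ x : Finset (Fin d) × (Fin d → Bool), p x * ∑ T ∈ x.1.powerset,
          (2 : ℝ) ^ (-(k : ℤ)) * |yhat T - (D.map fun e => ∏ i ∈ T, e i).sum| ^ 2 := by
        refine sum_le_sum fun x _ => ?_
        obtain hx | hx := eq_or_ne (p x) 0
        · simp [hx]
        · rw [← hpk x hx]
          exact mul_le_mul_of_nonneg_left (sq_abs_sum_powerset_sub_le x.1 D yhat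
            (fun e he i _ => hD e he i) (fun i _ => by cases x.2 i <;> simp)) (hp0 x)
    _ = _ := sum_mul_sum_powerset_eq_sum_mul p Prod.fst _ _
    _ ≤ lam ^ 2 := hmse

/-- Let `p` be a probability distribution over pairs `(S,β)` with
`|S| = k` and `β ∈ {−1,1}^S` (encoded by a Boolean vector, `true ↦ 1`, `false ↦ -1`),
and let `p'` be the distribution on subsets of `[d]` obtained by sampling `(S,β) ∼ p`
and then a uniformly random subset `T` of `S` (each with probability `2^{−k}`).
If `E_{T ∼ p'}[|ŷ_T − parity_T(D)|²] ≤ λ²`, then the estimates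
`z_{S,β} = Σ_{T ⊆ S} α_{S,β,T} ŷ_T` satisfy `E_{(S,β) ∼ p}[|z_{S,β} − marg_{(S,β)}(D)|²] ≤ λ²`. -/
theorem stmt_3 (d k : ℕ) (hd : 1 ≤ d) (hk : 1 ≤ k)
    (D : Multiset (Fin d → ℝ)) (hD : ∀ e ∈ D, ∀ i, e i = 1 ∨ e i = -1)
    (p : Finset (Fin d) × (Fin d → Bool) → ℝ)
    (hp0 : ∀ x, 0 ≤ p x)
    (hp1 : ∑ x : Finset (Fin d) × (Fin d → Bool), p x = 1)
    (hpk : ∀ x, p x ≠ 0 → x.1.card = k)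
    (yhat : Finset (Fin d) → ℝ) (lam : ℝ) (hlam : 0 ≤ lam)
    (hmse : ∑ T : Finset (Fin d),
        (∑ x : Finset (Fin d) × (Fin d → Bool),
          p x * (if T ⊆ x.1 then (2 : ℝ) ^ (-(k : ℤ)) else 0)) *
        |yhat T - (D.map fun e => ∏ i ∈ T, e i).sum| ^ 2 ≤ lam ^ 2) :
    ∑ x : Finset (Fin d) × (Fin d → Bool),
      p x *
        |(∑ T ∈ x.1.powerset,
            ((2 : ℝ) ^ (-(k : ℤ)) * ∏ i ∈ T, (if x.2 i then (1 : ℝ) else -1)) * yhat T) -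
          (D.map fun e =>
            ∏ i ∈ x.1, (if e i = (if x.2 i then (1 : ℝ) else -1) then (1 : ℝ) else 0)).sum| ^ 2
      ≤ lam ^ 2 :=
  stmt_3_general d k D hD p hp0 hpk yhat lam hmse
end
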